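/- Let b^t be the colouring of cells produced by the CWL update using only boundary and upper adjacencies: b^{t+1}_σ = HASH(b^t_σ, b^t_B(σ), b^t_↑(σ)), starting from a constant colouring, and let a^t be the colouring using boundary, lower, and upper adjacencies: a^{t+1}_σ = HASH(a^t_σ, a^t_B(σ), a^t_↓(σ), a^t_↑(σ)). Then for all t ≥ 0, b^{2t+1} refines a^t; consequently CWL with only boundary and upper adjacencies distinguishes the same pairs of non-isomorphic regular cell complexes as CWL with the complete set of adjacencies. -/
import Mathlib


/-- A combinatorial model of a (regular) cell complex: a finite set of cells
with a covering (boundary) relation `covers σ τ` meaning "σ ≺ τ". -/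
structure CC where
  Cell : Type
  fin : Fintype Cell
  deq : DecidableEq Cell
  covers : Cell → Cell → Prop
  dec : DecidableRel covers

attribute [instance] CC.fin CC.deq CC.dec

/-- The boundary `B(σ) = {τ | τ ≺ σ}`. -/
def CC.bd (X : CC) (σ : X.Cell) : Finset X.Cell :=
  Finset.univ.filter (fun τ => X.covers τ σ)

/-- The coboundary `C(σ) = {τ | σ ≺ τ}`. -/
def CC.cobd (X : CC) (σ : X.Cell) : Finset X.Cell :=
  Finset.univ.filter (fun τ => X.covers σ τ)

/-- Multiset of colours of the boundary cells of `σ`. -/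
def cB {Colour : Type} (X : CC) (c : X.Cell → Colour) (σ : X.Cell) : Multiset Colour :=
  (X.bd σ).val.map c

/-- Multiset of colours of the coboundary cells of `σ`. -/
def cC {Colour : Type} (X : CC) (c : X.Cell → Colour) (σ : X.Cell) : Multiset Colour :=
  (X.cobd σ).val.map c

/-- Upper-adjacency colour multiset: pairs `(c τ, c δ)` over `τ ∈ N↑(σ)`,
`δ ∈ C(σ) ∩ C(τ)`, i.e. pairs `(τ, δ)` with `σ ≺ δ` and `τ ≺ δ`. -/
def cUp {Colour : Type} (X : CC) (c : X.Cell → Colour) (σ : X.Cell) :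
    Multiset (Colour × Colour) :=
  ((Finset.univ ×ˢ Finset.univ).filter
    (fun p : X.Cell × X.Cell => X.covers σ p.2 ∧ X.covers p.1 p.2)).val.map
      (fun p => (c p.1, c p.2))

/-- Lower-adjacency colour multiset: pairs `(c τ, c δ)` over `τ ∈ N↓(σ)`,
`δ ∈ B(σ) ∩ B(τ)`, i.e. pairs `(τ, δ)` with `δ ≺ σ` and `δ ≺ τ`. -/
def cDown {Colour : Type} (X : CC) (c : X.Cell → Colour) (σ : X.Cell) :
    Multiset (Colour × Colour) :=
  ((Finset.univ ×ˢ Finset.univ).filter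
    (fun p : X.Cell × X.Cell => X.covers p.2 σ ∧ X.covers p.2 p.1)).val.map
      (fun p => (c p.1, c p.2))

/-- Colour histogram of a complex. -/
def histo {Colour : Type} (X : CC) (c : X.Cell → Colour) : Multiset Colour :=
  Finset.univ.val.map c

/-- CWL with the complete set of adjacencies: constant initialisation and
injective-hash update `c^{t+1}_σ = HASH(c^t_σ, c_B, c_C, c_↓, c_↑)`, captured by
the iff (determinism + injectivity of the hash). -/
def IsCWLFull {Colour : Type} (c : ∀ X : CC, ℕ → X.Cell → Colour) : Prop :=
  (∀ (X Y : CC) (σ : X.Cell) (τ : Y.Cell), c X 0 σ = c Y 0 τ) ∧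
  (∀ (X Y : CC) (σ : X.Cell) (τ : Y.Cell) (t : ℕ),
    c X (t + 1) σ = c Y (t + 1) τ ↔
      (c X t σ = c Y t τ ∧ cB X (c X t) σ = cB Y (c Y t) τ ∧
        cC X (c X t) σ = cC Y (c Y t) τ ∧
        cDown X (c X t) σ = cDown Y (c Y t) τ ∧
        cUp X (c X t) σ = cUp Y (c Y t) τ))

/-- CWL without coboundary adjacencies:
`c^{t+1}_σ = HASH(c^t_σ, c_B, c_↓, c_↑)`. -/
def IsCWLNoCobd {Colour : Type} (c : ∀ X : CC, ℕ → X.Cell → Colour) : Prop :=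
  (∀ (X Y : CC) (σ : X.Cell) (τ : Y.Cell), c X 0 σ = c Y 0 τ) ∧
  (∀ (X Y : CC) (σ : X.Cell) (τ : Y.Cell) (t : ℕ),
    c X (t + 1) σ = c Y (t + 1) τ ↔
      (c X t σ = c Y t τ ∧ cB X (c X t) σ = cB Y (c Y t) τ ∧
        cDown X (c X t) σ = cDown Y (c Y t) τ ∧
        cUp X (c X t) σ = cUp Y (c Y t) τ))

/-- CWL with only boundary and upper adjacencies:
`c^{t+1}_σ = HASH(c^t_σ, c_B, c_↑)`. -/
def IsCWLBU {Colour : Type} (c : ∀ X : CC, ℕ → X.Cell → Colour) : Prop :=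
  (∀ (X Y : CC) (σ : X.Cell) (τ : Y.Cell), c X 0 σ = c Y 0 τ) ∧
  (∀ (X Y : CC) (σ : X.Cell) (τ : Y.Cell) (t : ℕ),
    c X (t + 1) σ = c Y (t + 1) τ ↔
      (c X t σ = c Y t τ ∧ cB X (c X t) σ = cB Y (c Y t) τ ∧
        cUp X (c X t) σ = cUp Y (c Y t) τ))

section Aux

private def pairEmb {α : Type} (y : α) : α ↪ α × α :=
  ⟨fun x => (x, y), fun a b h => (Prod.ext_iff.mp h).1⟩

private lemma mapRefine {α β γ γ' : Type*} {s : Multiset α} {t : Multiset β}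
    {f : α → γ} {g : β → γ} {f' : α → γ'} {g' : β → γ'}
    (h : s.map f = t.map g)
    (hr : ∀ x ∈ s, ∀ y ∈ t, f x = g y → f' x = g' y) :
    s.map f' = t.map g' := by
  rw [← Multiset.rel_eq] at h ⊢
  rw [Multiset.rel_map] at h ⊢
  exact h.mono hr

private lemma bindCongr {α β γ : Type*} {r : α → β → Prop} {s : Multiset α} {t : Multiset β}
    (h : Multiset.Rel r s t) {f : α → Multiset γ} {g : β → Multiset γ}
    (hfg : ∀ a b, r a b → f a = g b) : s.bind f = t.bind g := by
  induction h with
  | zero => simp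
  | @cons a b s t hab _ ih => simp [Multiset.cons_bind, hfg _ _ hab, ih]

private lemma filter_prod_val {α : Type} [Fintype α] [DecidableEq α]
    (Q : α → Prop) (R : α → α → Prop) [DecidablePred Q] [∀ y, DecidablePred (fun x => R x y)]
    [DecidablePred (fun p : α × α => Q p.2 ∧ R p.1 p.2)] :
    ((Finset.univ ×ˢ Finset.univ).filter (fun p : α × α => Q p.2 ∧ R p.1 p.2)).val =
    (Finset.univ.filter Q).val.bind
      (fun y => ((Finset.univ.filter (fun x => R x y)).val.map (fun x => (x, y)))) := by
  classical
  have hd : (↑(Finset.univ.filter Q) : Set α).PairwiseDisjoint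
      (fun y => (Finset.univ.filter (fun x => R x y)).map (pairEmb y)) := by
    intro y1 _ y2 _ hne
    refine Finset.disjoint_left.mpr ?_
    intro p hp1 hp2
    simp only [Finset.mem_map, pairEmb, Function.Embedding.coeFn_mk] at hp1 hp2
    obtain ⟨x1, _, rfl⟩ := hp1
    obtain ⟨x2, _, h2⟩ := hp2
    exact hne ((Prod.ext_iff.mp h2).2).symm
  have key : ((Finset.univ ×ˢ Finset.univ).filter (fun p : α × α => Q p.2 ∧ R p.1 p.2)) =
      (Finset.univ.filter Q).disjiUnion
        (fun y => (Finset.univ.filter (fun x => R x y)).map (pairEmb y)) hd := by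
    ext p
    simp only [Finset.mem_filter, Finset.mem_product, Finset.mem_univ, true_and,
      Finset.mem_disjiUnion, Finset.mem_map, pairEmb, Function.Embedding.coeFn_mk]
    constructor
    · rintro ⟨hQ, hR⟩
      exact ⟨p.2, hQ, p.1, hR, rfl⟩
    · rintro ⟨y, hQ, x, hR, rfl⟩
      exact ⟨hQ, hR⟩
  rw [key, Finset.disjiUnion_val]
  apply Multiset.bind_congr
  intro y _
  rw [Finset.map_val]
  rfl

private lemma cUp_eq_bind {Colour : Type} (X : CC) (c : X.Cell → Colour) (σ : X.Cell) :
    cUp X c σ =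
      (X.cobd σ).val.bind (fun ε => (X.bd ε).val.map (fun τ' => (c τ', c ε))) := by
  show ((Finset.univ ×ˢ Finset.univ).filter
      (fun p : X.Cell × X.Cell => X.covers σ p.2 ∧ X.covers p.1 p.2)).val.map
        (fun p => (c p.1, c p.2)) = _
  rw [filter_prod_val (fun ε => X.covers σ ε) (fun τ' ε => X.covers τ' ε)]
  rw [Multiset.map_bind]
  apply Multiset.bind_congr
  intro ε _
  rw [Multiset.map_map]
  rfl

private lemma cDown_eq_bind {Colour : Type} (X : CC) (c : X.Cell → Colour) (σ : X.Cell) :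
    cDown X c σ =
      (X.bd σ).val.bind (fun δ => (X.cobd δ).val.map (fun ε => (c ε, c δ))) := by
  show ((Finset.univ ×ˢ Finset.univ).filter
      (fun p : X.Cell × X.Cell => X.covers p.2 σ ∧ X.covers p.2 p.1)).val.map
        (fun p => (c p.1, c p.2)) = _
  rw [filter_prod_val (fun δ => X.covers δ σ) (fun ε δ => X.covers δ ε)]
  rw [Multiset.map_bind]
  apply Multiset.bind_congr
  intro δ _
  rw [Multiset.map_map]
  rfl

end Aux

section Main

variable {Colour Colour' : Type}

private lemma bd_card_eq {b : ∀ X : CC, ℕ → X.Cell → Colour'} (hb : IsCWLBU b)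
    {X Y : CC} {σ : X.Cell} {τ : Y.Cell} {t : ℕ}
    (h : b X (t + 1) σ = b Y (t + 1) τ) : (X.bd σ).card = (Y.bd τ).card := by
  have h2 := ((hb.2 X Y σ τ t).mp h).2.1
  have h3 := congrArg Multiset.card h2
  rw [cB, cB, Multiset.card_map, Multiset.card_map] at h3
  exact h3

private lemma cC_of_cUp {b : ∀ X : CC, ℕ → X.Cell → Colour'} (hb : IsCWLBU b)
    {X Y : CC} {σ : X.Cell} {τ : Y.Cell} {t : ℕ}
    (h : cUp X (b X (t + 1)) σ = cUp Y (b Y (t + 1)) τ) :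
    cC X (b X (t + 1)) σ = cC Y (b Y (t + 1)) τ := by
  classical
  set c : X.Cell → Colour' := b X (t + 1) with hc
  set c' : Y.Cell → Colour' := b Y (t + 1) with hc'
  have hsnd := congrArg (Multiset.map Prod.snd) h
  rw [cUp_eq_bind, cUp_eq_bind, Multiset.map_bind, Multiset.map_bind] at hsnd
  simp only [Multiset.map_map, Function.comp, Multiset.map_const',
    Finset.card_val] at hsnd
  have hcount : ∀ y : Colour',
      (∑ ε ∈ (X.cobd σ).filter (fun ε => c ε = y), (X.bd ε).card) =
      (∑ ε ∈ (Y.cobd τ).filter (fun ε => c' ε = y), (Y.bd ε).card) := by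
    intro y
    have hcy := congrArg (Multiset.count y) hsnd
    rw [Multiset.count_bind, Multiset.count_bind] at hcy
    simp only [Multiset.count_replicate] at hcy
    rw [Finset.sum_filter, Finset.sum_filter]
    exact hcy
  refine Multiset.ext.mpr (fun y => ?_)
  have hX : (cC X c σ).count y = ((X.cobd σ).filter (fun ε => c ε = y)).card := by
    rw [cC, Multiset.count_map]
    rw [← Finset.filter_val]
    simp [Finset.card, eq_comm]
  have hY : (cC Y c' τ).count y = ((Y.cobd τ).filter (fun ε => c' ε = y)).card := by
    rw [cC, Multiset.count_map]
    rw [← Finset.filter_val]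
    simp [Finset.card, eq_comm]
  rw [hX, hY]
  set A := (X.cobd σ).filter (fun ε => c ε = y) with hA
  set B := (Y.cobd τ).filter (fun ε => c' ε = y) with hB
  have hs := hcount y
  rw [← hA, ← hB] at hs
  by_cases hAn : A.Nonempty
  · obtain ⟨ε0, hε0⟩ := hAn
    have hε0c : c ε0 = y := (Finset.mem_filter.mp hε0).2
    have hε0m : ε0 ∈ X.cobd σ := (Finset.mem_filter.mp hε0).1
    set n := (X.bd ε0).card with hn
    have hnpos : 0 < n := by
      refine Finset.card_pos.mpr ⟨σ, ?_⟩
      simp only [CC.bd, Finset.mem_filter, Finset.mem_univ, true_and]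
      simpa [CC.cobd] using hε0m
    have hsumA : (∑ ε ∈ A, (X.bd ε).card) = A.card * n := by
      rw [Finset.sum_congr rfl (fun ε hε => ?_), Finset.sum_const, smul_eq_mul]
      exact bd_card_eq hb (show b X (t+1) ε = b X (t+1) ε0 by
        rw [← hc]; rw [(Finset.mem_filter.mp hε).2, hε0c])
    have hsumB : (∑ ε ∈ B, (Y.bd ε).card) = B.card * n := by
      rw [Finset.sum_congr rfl (fun ε hε => ?_), Finset.sum_const, smul_eq_mul]
      exact bd_card_eq hb (show b Y (t+1) ε = b X (t+1) ε0 by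
        rw [← hc, ← hc']; rw [(Finset.mem_filter.mp hε).2, hε0c])
    rw [hsumA, hsumB] at hs
    exact Nat.eq_of_mul_eq_mul_right hnpos hs
  · rw [Finset.not_nonempty_iff_eq_empty] at hAn
    by_cases hBn : B.Nonempty
    · obtain ⟨ε0, hε0⟩ := hBn
      have hε0c : c' ε0 = y := (Finset.mem_filter.mp hε0).2
      have hε0m : ε0 ∈ Y.cobd τ := (Finset.mem_filter.mp hε0).1
      set n := (Y.bd ε0).card with hn
      have hnpos : 0 < n := by
        refine Finset.card_pos.mpr ⟨τ, ?_⟩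
        simp only [CC.bd, Finset.mem_filter, Finset.mem_univ, true_and]
        simpa [CC.cobd] using hε0m
      have hsumB : (∑ ε ∈ B, (Y.bd ε).card) = B.card * n := by
        rw [Finset.sum_congr rfl (fun ε hε => ?_), Finset.sum_const, smul_eq_mul]
        exact bd_card_eq hb (show b Y (t+1) ε = b Y (t+1) ε0 by
          rw [← hc']; rw [(Finset.mem_filter.mp hε).2, hε0c])
      rw [hAn, Finset.sum_empty, hsumB] at hs
      have hb0 : B.card = 0 := by
        rcases Nat.mul_eq_zero.mp hs.symm with h0 | h0
        · exact h0
        · omega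
      rw [hAn, hb0]
      simp
    · rw [Finset.not_nonempty_iff_eq_empty] at hBn
      rw [hAn, hBn]
      simp

private lemma a_refines_b {a : ∀ X : CC, ℕ → X.Cell → Colour}
    {b : ∀ X : CC, ℕ → X.Cell → Colour'}
    (ha : IsCWLNoCobd a) (hb : IsCWLBU b) :
    ∀ (t : ℕ) (X Y : CC) (σ : X.Cell) (τ : Y.Cell),
      a X t σ = a Y t τ → b X t σ = b Y t τ := by
  intro t
  induction t with
  | zero => intro X Y σ τ _; exact hb.1 X Y σ τ
  | succ t ih =>
    intro X Y σ τ h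
    obtain ⟨e0, eB, _eD, eU⟩ := (ha.2 X Y σ τ t).mp h
    refine (hb.2 X Y σ τ t).mpr ⟨ih X Y σ τ e0, ?_, ?_⟩
    · exact mapRefine eB (fun x _ y _ hxy => ih X Y x y hxy)
    · exact mapRefine eU (fun p _ q _ hpq => by
        obtain ⟨h1, h2⟩ := Prod.ext_iff.mp hpq
        exact Prod.ext_iff.mpr ⟨ih X Y p.1 q.1 h1, ih X Y p.2 q.2 h2⟩)

private lemma b_refines_a {a : ∀ X : CC, ℕ → X.Cell → Colour}
    {b : ∀ X : CC, ℕ → X.Cell → Colour'}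
    (ha : IsCWLNoCobd a) (hb : IsCWLBU b) :
    ∀ (t : ℕ) (X Y : CC) (σ : X.Cell) (τ : Y.Cell),
      b X (2 * t + 1) σ = b Y (2 * t + 1) τ → a X t σ = a Y t τ := by
  intro t
  induction t with
  | zero => intro X Y σ τ _; exact ha.1 X Y σ τ
  | succ t ih =>
    intro X Y σ τ h
    have e : 2 * (t + 1) + 1 = ((2 * t + 1) + 1) + 1 := by ring
    rw [e] at h
    obtain ⟨h1, hB2, _hU2⟩ := (hb.2 X Y σ τ ((2 * t + 1) + 1)).mp h
    obtain ⟨g1, gB, gU⟩ := (hb.2 X Y σ τ (2 * t + 1)).mp h1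
    refine (ha.2 X Y σ τ t).mpr ⟨ih X Y σ τ g1, ?_, ?_, ?_⟩
    · exact mapRefine gB (fun x _ y _ hxy => ih X Y x y hxy)
    · -- cDown
      have hrel : Multiset.Rel
          (fun δ δ' => b X ((2 * t + 1) + 1) δ = b Y ((2 * t + 1) + 1) δ')
          (X.bd σ).val (Y.bd τ).val :=
        Multiset.rel_map.mp (Multiset.rel_eq.mpr hB2)
      rw [cDown_eq_bind, cDown_eq_bind]
      refine bindCongr hrel (fun δ δ' hδ => ?_)
      obtain ⟨p1, _pB, pU⟩ := (hb.2 X Y δ δ' (2 * t + 1)).mp hδ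
      have haδ : a X t δ = a Y t δ' := ih X Y δ δ' p1
      have hcC : cC X (b X (2 * t + 1)) δ = cC Y (b Y (2 * t + 1)) δ' :=
        cC_of_cUp hb pU
      have hcCa : (X.cobd δ).val.map (a X t) = (Y.cobd δ').val.map (a Y t) :=
        mapRefine hcC (fun x _ y _ hxy => ih X Y x y hxy)
      exact mapRefine hcCa (fun x _ y _ hxy => by rw [hxy, haδ])
    · exact mapRefine gU (fun p _ q _ hpq => by
        obtain ⟨h1', h2'⟩ := Prod.ext_iff.mp hpq
        exact Prod.ext_iff.mpr ⟨ih X Y p.1 q.1 h1', ih X Y p.2 q.2 h2'⟩)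

end Main

/-- With `b` the CWL colouring using only boundary and upper
adjacencies and `a` the CWL colouring using boundary, lower and upper
adjacencies, `b^{2t+1}` refines `a^t`; consequently the two colourings
distinguish exactly the same pairs of (non-isomorphic) regular cell
complexes. -/
theorem stmt_4 {Colour Colour' : Type}
    (a : ∀ X : CC, ℕ → X.Cell → Colour) (b : ∀ X : CC, ℕ → X.Cell → Colour')
    (ha : IsCWLNoCobd a) (hb : IsCWLBU b) :
    (∀ (t : ℕ) (X Y : CC) (σ : X.Cell) (τ : Y.Cell),
      b X (2 * t + 1) σ = b Y (2 * t + 1) τ → a X t σ = a Y t τ) ∧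
    (∀ X Y : CC,
      (∃ t, histo X (a X t) ≠ histo Y (a Y t)) ↔
      (∃ t, histo X (b X t) ≠ histo Y (b Y t))) := by
  refine ⟨b_refines_a ha hb, fun X Y => ⟨?_, ?_⟩⟩
  · rintro ⟨t, hne⟩
    refine ⟨2 * t + 1, fun hbeq => hne ?_⟩
    exact mapRefine hbeq (fun x _ y _ hxy => b_refines_a ha hb t X Y x y hxy)
  · rintro ⟨t, hne⟩
    refine ⟨t, fun haeq => hne ?_⟩
    exact mapRefine haeq (fun x _ y _ hxy => a_refines_b ha hb t X Y x y hxy)
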